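/- Let d > 1 be a square-free positive integer and p < 0, q ∈ ℚ with q ≠ 0, d' := p² − q²d > 0, and d' ∈ d·(ℚ^×)². Let ξ₊ := √(p+q√d) (purely imaginary) and K := ℚ(√d, ξ₊). Then there is an element σ₀ ∈ Gal(K/ℚ) of order 4 with σ₀(√d) = −√d, and σ₀² acts on K ⊂ ℂ as complex conjugation. -/

import Mathlib

/-!
Since `p² - q²d = d r²`, the number `ξ₋ := r√d / ξ₊` satisfies `ξ₋² = p - q√d`, so `ξ₊` and `ξ₋`
are both roots of `(X² - p)² - q²d`. This is the minimal polynomial of `ξ₊`, because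
`[ℚ(√d, ξ₊) : ℚ] = 4`: `√d` is irrational and `ξ₊` is not real. Hence `ξ₊ ↦ ξ₋` defines an
automorphism `σ₀` of `ℚ(ξ₊) = ℚ(√d, ξ₊)`. Squaring `ξ₊² = p + q√d` shows `σ₀ √d = -√d`, and then
`σ₀ ξ₋ = r σ₀(√d) / ξ₋ = -ξ₊ = conj ξ₊`. So `σ₀²` is complex conjugation on the generator, hence
on all of `ℚ(ξ₊)`, and `σ₀` has order `4`.
-/

open IntermediateField Polynomial

theorem Nat.irrational_sqrt_of_squarefree {d : ℕ} (hd : 1 < d) (hsf : Squarefree d) :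
    Irrational √d :=
  irrational_sqrt_natCast_iff.2 fun ⟨k, hk⟩ => by
    have hk1 : k = 1 := Nat.isUnit_iff.1 (hsf k (by rw [hk]))
    rw [hk1] at hk
    omega

section

variable {F E : Type*} [Field F] [Field E] [Algebra F E]

theorem IntermediateField.finrank_adjoin_simple_eq_two_of_sq_eq {x : E} {a : F}
    (hx : x ^ 2 = algebraMap F E a) (hxF : x ∉ (⊥ : IntermediateField F E)) :
    Module.finrank F F⟮x⟯ = 2 := by
  have hroot : aeval x (X ^ 2 - C a) = 0 := by simp [hx]
  have hint : IsIntegral F x := ⟨_, monic_X_pow_sub_C a two_ne_zero, hroot⟩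
  have hle : Module.finrank F F⟮x⟯ ≤ 2 := by
    rw [adjoin.finrank hint, ← natDegree_X_pow_sub_C (n := 2) (r := a)]
    exact natDegree_le_of_dvd (minpoly.dvd F x hroot) (X_pow_sub_C_ne_zero two_pos a)
  have hne : Module.finrank F F⟮x⟯ ≠ 1 := by
    rwa [ne_eq, finrank_eq_one_iff, adjoin_simple_eq_bot_iff]
  have hpos : 0 < Module.finrank F F⟮x⟯ :=
    have := adjoin.finiteDimensional hint; Module.finrank_pos
  omega

theorem IntermediateField.exists_algEquiv_adjoin_simple_gen_eq {x y : E} (hx : IsIntegral F x)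
    (hy : y ∈ F⟮x⟯) (hroot : aeval y (minpoly F x) = 0) :
    ∃ σ : F⟮x⟯ ≃ₐ[F] F⟮x⟯, (σ (AdjoinSimple.gen F x) : E) = y := by
  have := adjoin.finiteDimensional hx
  have hy' : (⟨y, hy⟩ : F⟮x⟯) ∈ (minpoly F x).aroots F⟮x⟯ := by
    refine mem_aroots.2 ⟨minpoly.ne_zero hx, Subtype.ext ?_⟩
    rw [← aeval_coe]
    exact hroot
  set φ := (algHomAdjoinIntegralEquiv F hx).symm ⟨_, hy'⟩
  exact ⟨AlgEquiv.ofBijective φ φ.bijective,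
    congrArg Subtype.val (algHomAdjoinIntegralEquiv_symm_apply_gen F hx ⟨_, hy'⟩)⟩

end

theorem map_eq_neg_of_sq_eq_add_mul {A G : Type*} [Field A] [CharZero A] [FunLike G A A]
    [RingHomClass G A A] (σ : G) {x y s : A} {p q r : ℚ} (hq : q ≠ 0) (hy0 : y ≠ 0) (hx : x ^ 2 = p + q * s)
    (hy : y ^ 2 = p - q * s) (hxy : y * x = r * s) (hσ : σ x = y) :
    σ s = -s ∧ σ y = -x := by
  have hs : σ s = -s := by
    have h := congrArg σ hx
    rw [map_pow, map_add, map_mul, map_ratCast, map_ratCast, hσ, hy] at h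
    have hq' : (q : A) ≠ 0 := by exact_mod_cast hq
    exact mul_left_cancel₀ hq' (by linear_combination -h)
  refine ⟨hs, mul_right_cancel₀ hy0 ?_⟩
  have h := congrArg σ hxy
  rw [map_mul, map_mul, map_ratCast, hσ, hs] at h
  linear_combination h + hxy

theorem IntermediateField.orderOf_eq_four_of_apply_apply_eq_conj {F : Type*} [Field F]
    [Algebra F ℂ] {K : IntermediateField F ℂ} (σ : K ≃ₐ[F] K)
    (hσ : ∀ x, (σ (σ x) : ℂ) = starRingEnd ℂ x) (hK : ∃ x : K, starRingEnd ℂ x ≠ x) :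
    orderOf σ = 4 := by
  have hsq : ∀ (τ : K ≃ₐ[F] K) x, (τ ^ 2) x = τ (τ x) := fun τ x => by
    rw [pow_two, AlgEquiv.mul_apply]
  refine orderOf_eq_prime_pow (p := 2) (n := 1) ?_ ?_
  · obtain ⟨x, hx⟩ := hK
    intro h
    apply hx
    rw [← hσ, ← hsq, show σ ^ 2 = 1 from h, AlgEquiv.one_apply]
  · ext x
    rw [show σ ^ 2 ^ (1 + 1) = (σ ^ 2) ^ 2 from (pow_mul σ 2 2), hsq, hsq, hsq, hσ, hσ,
      Complex.conj_conj, AlgEquiv.one_apply]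

theorem IntermediateField.adjoin_insert_eq_of_mem {F E : Type*} [Field F] [Field E] [Algebra F E]
    {S : Set E} {a : E} (ha : a ∈ adjoin F S) : adjoin F (insert a S) = adjoin F S := by
  rw [← adjoin_insert_adjoin, Set.insert_eq_of_mem ha, adjoin_self]

noncomputable def biquadratic (p c : ℚ) : ℚ[X] := (X ^ 2 - C p) ^ 2 - C c

theorem biquadratic_monic (p c : ℚ) : (biquadratic p c).Monic := by
  unfold biquadratic
  monicity!

theorem natDegree_biquadratic (p c : ℚ) : (biquadratic p c).natDegree = 4 := by
  unfold biquadratic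
  compute_degree!

theorem aeval_biquadratic {A : Type*} [DivisionRing A] [CharZero A] (p c : ℚ) (y : A) :
    aeval y (biquadratic p c) = (y ^ 2 - p) ^ 2 - c := by
  simp [biquadratic]

theorem sq_sqrt_natCast (d : ℕ) : (√d : ℂ) ^ 2 = d := by
  rw [← Complex.ofReal_pow, Real.sq_sqrt (Nat.cast_nonneg d), Complex.ofReal_natCast]

section

variable {d : ℕ} {p q r : ℚ} {ξ : ℂ}

theorem sqrt_mem_adjoin_of_sq_eq (hq : q ≠ 0) (hξ : ξ ^ 2 = p + q * √d) : (√d : ℂ) ∈ ℚ⟮ξ⟯ := by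
  have hs : (√d : ℂ) = ((q⁻¹ : ℚ) : ℂ) * (ξ ^ 2 - p) := by
    rw [hξ]
    push_cast
    field_simp
    ring
  rw [hs]
  exact mul_mem (SubfieldClass.ratCast_mem _ _)
    (sub_mem (pow_mem (mem_adjoin_simple_self ℚ ξ) 2) (SubfieldClass.ratCast_mem _ _))

theorem finrank_adjoin_sqrt_adjoin_eq_four (hd : 1 < d) (hsf : Squarefree d)
    (hξ : ξ ^ 2 = p + q * √d) (hξ0 : ξ ≠ 0) (him : ξ.re = 0) :
    Module.finrank ℚ ℚ⟮(√d : ℂ), ξ⟯ = 4 := by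
  set L := ℚ⟮(√d : ℂ)⟯
  have hL : Module.finrank ℚ L = 2 := by
    refine finrank_adjoin_simple_eq_two_of_sq_eq (a := d) ?_ ?_
    · rw [sq_sqrt_natCast, map_natCast]
    · rintro ⟨a, ha⟩
      refine Nat.irrational_sqrt_of_squarefree hd hsf ⟨a, ?_⟩
      simpa using congrArg Complex.re ha
  have hLξ : Module.finrank L L⟮ξ⟯ = 2 := by
    have hc : (p + q * √d : ℂ) ∈ L :=
      add_mem (SubfieldClass.ratCast_mem _ _)
        (mul_mem (SubfieldClass.ratCast_mem _ _) (mem_adjoin_simple_self ℚ _))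
    refine finrank_adjoin_simple_eq_two_of_sq_eq (a := ⟨_, hc⟩) hξ ?_
    have hreal : L ≤ (Complex.ofRealAm.restrictScalars ℚ).fieldRange :=
      adjoin_simple_le_iff.2 ⟨√d, rfl⟩
    rintro ⟨⟨a, ha⟩, rfl⟩
    obtain ⟨b, hb⟩ := hreal ha
    exact hξ0 (Complex.ext him (by simp [← hb]))
  rw [← adjoin_simple_adjoin_simple]
  change Module.finrank ℚ L⟮ξ⟯ = 4
  rw [← Module.finrank_mul_finrank ℚ L L⟮ξ⟯, hL, hLξ]

theorem minpoly_eq_of_sq_eq (hd : 1 < d) (hsf : Squarefree d) (hq : q ≠ 0)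
    (hξ : ξ ^ 2 = p + q * √d) (hξ0 : ξ ≠ 0) (him : ξ.re = 0) :
    minpoly ℚ ξ = biquadratic p (q ^ 2 * d) := by
  have hroot : aeval ξ (biquadratic p (q ^ 2 * d)) = 0 := by
    rw [aeval_biquadratic, hξ]
    push_cast
    linear_combination (q : ℂ) ^ 2 * sq_sqrt_natCast d
  have hint : IsIntegral ℚ ξ := ⟨_, biquadratic_monic _ _, hroot⟩
  refine (eq_of_monic_of_dvd_of_natDegree_le (minpoly.monic hint) (biquadratic_monic _ _)
    (minpoly.dvd ℚ ξ hroot) ?_).symm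
  rw [natDegree_biquadratic, ← adjoin.finrank hint,
    ← adjoin_insert_eq_of_mem (sqrt_mem_adjoin_of_sq_eq hq hξ),
    finrank_adjoin_sqrt_adjoin_eq_four hd hsf hξ hξ0 him]

theorem ne_zero_of_sq_eq (hd : d ≠ 0) (hr0 : r ≠ 0) (hrd : p ^ 2 - q ^ 2 * d = d * r ^ 2)
    (hξ : ξ ^ 2 = p + q * √d) : ξ ≠ 0 := by
  rintro rfl
  refine (mul_ne_zero (Nat.cast_ne_zero.2 hd) (pow_ne_zero 2 (Rat.cast_ne_zero.2 hr0)) :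
    (d : ℂ) * (r : ℂ) ^ 2 ≠ 0) ?_
  rw [← (by exact_mod_cast hrd : (p : ℂ) ^ 2 - q ^ 2 * d = d * r ^ 2)]
  linear_combination (q * √d - p : ℂ) * hξ + (q : ℂ) ^ 2 * sq_sqrt_natCast d

theorem exists_algEquiv_adjoin_apply_sqrt_eq_neg (hd : 1 < d) (hsf : Squarefree d) (hq : q ≠ 0)
    (hr0 : r ≠ 0) (hrd : p ^ 2 - q ^ 2 * d = d * r ^ 2) (hξ : ξ ^ 2 = p + q * √d)
    (him : ξ.re = 0) :
    ∃ σ : ℚ⟮ξ⟯ ≃ₐ[ℚ] ℚ⟮ξ⟯, (σ ⟨√d, sqrt_mem_adjoin_of_sq_eq hq hξ⟩ : ℂ) = -√d ∧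
      (σ (σ (AdjoinSimple.gen ℚ ξ)) : ℂ) = -ξ := by
  have hξ0 := ne_zero_of_sq_eq (by omega) hr0 hrd hξ
  have hmin := minpoly_eq_of_sq_eq hd hsf hq hξ hξ0 him
  set ξm : ℂ := √d * r / ξ
  have hrdC : (p : ℂ) ^ 2 - q ^ 2 * d = d * r ^ 2 := by exact_mod_cast hrd
  have hξm : ξm ^ 2 = p - q * √d := by
    rw [div_pow, div_eq_iff (pow_ne_zero 2 hξ0), hξ]
    linear_combination ((r : ℂ) ^ 2 + (q : ℂ) ^ 2) * sq_sqrt_natCast d - hrdC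
  have hξmξ : ξm * ξ = r * √d := by
    rw [div_mul_cancel₀ _ hξ0, mul_comm]
  have hξm_mem : ξm ∈ ℚ⟮ξ⟯ :=
    div_mem (mul_mem (sqrt_mem_adjoin_of_sq_eq hq hξ) (SubfieldClass.ratCast_mem _ _))
      (mem_adjoin_simple_self ℚ ξ)
  have hroot : aeval ξm (minpoly ℚ ξ) = 0 := by
    rw [hmin, aeval_biquadratic, hξm]
    push_cast
    linear_combination (q : ℂ) ^ 2 * sq_sqrt_natCast d
  have hint : IsIntegral ℚ ξ := minpoly.ne_zero_iff.1 (hmin ▸ (biquadratic_monic _ _).ne_zero)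
  obtain ⟨σ, hσ⟩ := exists_algEquiv_adjoin_simple_gen_eq hint hξm_mem hroot
  set s : ℚ⟮ξ⟯ := ⟨√d, sqrt_mem_adjoin_of_sq_eq hq hξ⟩
  set y : ℚ⟮ξ⟯ := ⟨ξm, hξm_mem⟩
  have hy0 : y ≠ 0 := ne_of_apply_ne Subtype.val
    (div_ne_zero (mul_ne_zero (Complex.ofReal_ne_zero.2 (Real.sqrt_ne_zero'.2 (by positivity)))
      (by exact_mod_cast hr0)) hξ0)
  obtain ⟨hσs, hσy⟩ := map_eq_neg_of_sq_eq_add_mul σ hq hy0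
    (x := AdjoinSimple.gen ℚ ξ) (s := s)
    (Subtype.ext (by push_cast; exact hξ)) (Subtype.ext (by push_cast; exact hξm))
    (Subtype.ext (by push_cast; exact hξmξ)) (Subtype.ext hσ)
  refine ⟨σ, congrArg Subtype.val hσs, ?_⟩
  exact congrArg Subtype.val ((congrArg σ (Subtype.ext hσ : _ = y)).trans hσy)

end

theorem apply_apply_eq_conj_of_apply_apply_gen {ξ : ℂ} (σ : ℚ⟮ξ⟯ ≃ₐ[ℚ] ℚ⟮ξ⟯)
    (h : (σ (σ (AdjoinSimple.gen ℚ ξ)) : ℂ) = starRingEnd ℂ ξ) (x : ℚ⟮ξ⟯) :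
    (σ (σ x) : ℂ) = starRingEnd ℂ x := by
  have hext : (val ℚ⟮ξ⟯).comp (σ.toAlgHom.comp σ.toAlgHom) =
      (Complex.conjAe.restrictScalars ℚ).toAlgHom.comp (val ℚ⟮ξ⟯) := by
    refine adjoin_algHom_ext ℚ fun y hy => ?_
    obtain rfl := Set.mem_singleton_iff.1 hy
    exact h
  exact DFunLike.congr_fun hext x

theorem stmt13_general (d : ℕ) (hd : 1 < d) (hsf : Squarefree d) (p q : ℚ) (hq : q ≠ 0)
    (hsq : ∃ r : ℚ, r ≠ 0 ∧ p ^ 2 - q ^ 2 * d = d * r ^ 2)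
    (ξp : ℂ) (hξp : ξp ^ 2 = (p : ℂ) + (q : ℂ) * (Real.sqrt d : ℂ)) (him : ξp.re = 0)
    (hmem : (Real.sqrt d : ℂ) ∈ (ℚ⟮(Real.sqrt d : ℂ), ξp⟯ : IntermediateField ℚ ℂ)) :
    ∃ σ₀ : (ℚ⟮(Real.sqrt d : ℂ), ξp⟯ : IntermediateField ℚ ℂ) ≃ₐ[ℚ]
        (ℚ⟮(Real.sqrt d : ℂ), ξp⟯ : IntermediateField ℚ ℂ),
      orderOf σ₀ = 4 ∧
      (σ₀ ⟨(Real.sqrt d : ℂ), hmem⟩ : ℂ) = -(Real.sqrt d : ℂ) ∧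
      ∀ x : (ℚ⟮(Real.sqrt d : ℂ), ξp⟯ : IntermediateField ℚ ℂ),
        (σ₀ (σ₀ x) : ℂ) = (starRingEnd ℂ) (x : ℂ) := by
  obtain ⟨r, hr0, hrd⟩ := hsq
  obtain ⟨σ, hσs, hσσξ⟩ := exists_algEquiv_adjoin_apply_sqrt_eq_neg hd hsf hq hr0 hrd hξp him
  have hconj : starRingEnd ℂ ξp = -ξp := by
    rw [← Complex.re_add_im ξp, him]
    simp
  have hσσ := apply_apply_eq_conj_of_apply_apply_gen σ (hσσξ.trans hconj.symm)
  revert hmem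
  rw [adjoin_insert_eq_of_mem (sqrt_mem_adjoin_of_sq_eq hq hξp)]
  intro hmem
  refine ⟨σ, orderOf_eq_four_of_apply_apply_eq_conj σ hσσ ⟨AdjoinSimple.gen ℚ ξp, ?_⟩, hσs, hσσ⟩
  change starRingEnd ℂ ξp ≠ ξp
  rw [hconj]
  exact neg_ne_self.2 (ne_zero_of_sq_eq (by omega) hr0 hrd hξp)

theorem stmt13 (d : ℕ) (hd : 1 < d) (hsf : Squarefree d) (p q : ℚ) (hp : p < 0) (hq : q ≠ 0)
    (hd' : 0 < p ^ 2 - q ^ 2 * d)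
    (hsq : ∃ r : ℚ, r ≠ 0 ∧ p ^ 2 - q ^ 2 * d = d * r ^ 2)
    (ξp : ℂ) (hξp : ξp ^ 2 = (p : ℂ) + (q : ℂ) * (Real.sqrt d : ℂ)) (him : ξp.re = 0)
    (hmem : (Real.sqrt d : ℂ) ∈ (ℚ⟮(Real.sqrt d : ℂ), ξp⟯ : IntermediateField ℚ ℂ)) :
    ∃ σ₀ : (ℚ⟮(Real.sqrt d : ℂ), ξp⟯ : IntermediateField ℚ ℂ) ≃ₐ[ℚ]
        (ℚ⟮(Real.sqrt d : ℂ), ξp⟯ : IntermediateField ℚ ℂ),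
      orderOf σ₀ = 4 ∧
      (σ₀ ⟨(Real.sqrt d : ℂ), hmem⟩ : ℂ) = -(Real.sqrt d : ℂ) ∧
      ∀ x : (ℚ⟮(Real.sqrt d : ℂ), ξp⟯ : IntermediateField ℚ ℂ),
        (σ₀ (σ₀ x) : ℂ) = (starRingEnd ℂ) (x : ℂ) :=
  stmt13_general d hd hsf p q hq hsq ξp hξp him hmem
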